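/- Let G be an S-critical graph with respect to a list assignment L for G. Let G₁, G₂ be subgraphs of G such that G = G₁ ∪ G₂, G₁ ∩ G₂ is a proper subgraph of G₂, and S ⊆ G₁. Then G₂ is (G₁ ∩ G₂)-critical with respect to L. -/

import Mathlib

open Set

/-! ## List colorings -/

/-- `φ` is a proper coloring of `G` from the lists `L`. -/
def HasLColoring {V : Type} (G : SimpleGraph V) (L : V → Finset ℕ) : Prop :=
  ∃ φ : V → ℕ, (∀ v, φ v ∈ L v) ∧ ∀ ⦃u v⦄, G.Adj u v → φ u ≠ φ v

/-- `φ : V → ℕ` restricts to a proper `L`-coloring of the subgraph `H`. -/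
def IsLColoringOn {V : Type} {G : SimpleGraph V} (H : G.Subgraph) (L : V → Finset ℕ)
    (φ : V → ℕ) : Prop :=
  (∀ v ∈ H.verts, φ v ∈ L v) ∧ ∀ ⦃u v⦄, H.Adj u v → φ u ≠ φ v

/-- An `L`-coloring `φ` of `T` extends to an `L`-coloring of `H`. -/
def ExtendsToIn {V : Type} {G : SimpleGraph V} (T H : G.Subgraph) (L : V → Finset ℕ)
    (φ : V → ℕ) : Prop :=
  ∃ ψ : V → ℕ, IsLColoringOn H L ψ ∧ ∀ v ∈ T.verts, ψ v = φ v

/-- `H` is `T`-critical with respect to `L` (inside the ambient graph `G`):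
`T` is a proper subgraph of `H` and for every proper subgraph `H'` of `H` containing `T`
there is an `L`-coloring of `T` that extends to `H'` but not to `H`. -/
def IsCriticalIn {V : Type} {G : SimpleGraph V} (L : V → Finset ℕ) (T H : G.Subgraph) : Prop :=
  T ≤ H ∧ T ≠ H ∧ ∀ H' : G.Subgraph, T ≤ H' → H' < H →
    ∃ φ : V → ℕ, IsLColoringOn T L φ ∧ ExtendsToIn T H' L φ ∧ ¬ ExtendsToIn T H L φ

/-! ## Plane embeddings -/

/-- A plane embedding of the graph `G`: vertices are distinct points of `ℝ²`, each edge is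
a simple arc between the points of its two ends, arcs are internally disjoint from each other
and from the vertex points. -/
structure PlaneEmbedding {V : Type} (G : SimpleGraph V) where
  vtx : V → ℝ × ℝ
  vtx_inj : Function.Injective vtx
  arc : Sym2 V → ℝ → ℝ × ℝ
  arc_cont : ∀ e ∈ G.edgeSet, ContinuousOn (arc e) (Set.Icc 0 1)
  arc_injOn : ∀ e ∈ G.edgeSet, Set.InjOn (arc e) (Set.Icc 0 1)
  arc_ends : ∀ u v : V, G.Adj u v →
    (arc s(u, v) 0 = vtx u ∧ arc s(u, v) 1 = vtx v) ∨
    (arc s(u, v) 0 = vtx v ∧ arc s(u, v) 1 = vtx u)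
  arc_int_avoid_vtx : ∀ e ∈ G.edgeSet, ∀ w : V, vtx w ∉ arc e '' Set.Ioo 0 1
  arc_int_disjoint : ∀ e ∈ G.edgeSet, ∀ f ∈ G.edgeSet, e ≠ f →
    (arc e '' Set.Ioo 0 1) ∩ (arc f '' Set.Ioo 0 1) = ∅

namespace PlaneEmbedding

variable {V : Type} {G : SimpleGraph V}

/-- The set of points of the plane used by the drawing of the subgraph `H`. -/
def subImage (ρ : PlaneEmbedding G) (H : G.Subgraph) : Set (ℝ × ℝ) :=
  (ρ.vtx '' H.verts) ∪ ⋃ e ∈ H.edgeSet, ρ.arc e '' Set.Icc 0 1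

/-- The set of points of the plane used by the drawing of `G`. -/
def image (ρ : PlaneEmbedding G) : Set (ℝ × ℝ) := ρ.subImage ⊤

/-- A face of the embedding: a connected component of the complement of the drawing. -/
def IsFace (ρ : PlaneEmbedding G) (F : Set (ℝ × ℝ)) : Prop :=
  ∃ x : ℝ × ℝ, x ∉ ρ.image ∧ F = connectedComponentIn (ρ.image)ᶜ x

/-- The outer (infinite) face: the unbounded face. -/
def IsOuterFace (ρ : PlaneEmbedding G) (F : Set (ℝ × ℝ)) : Prop :=
  ρ.IsFace F ∧ ¬ Bornology.IsBounded F

/-- The boundary graph `∂_G f` of a face `f`: the subgraph of `G` consisting of the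
vertices and edges drawn on the boundary of the face. -/
def faceBoundary (ρ : PlaneEmbedding G) (F : Set (ℝ × ℝ)) : G.Subgraph where
  verts := {v | ρ.vtx v ∈ closure F}
  Adj u v := G.Adj u v ∧ ρ.arc s(u, v) '' Set.Icc 0 1 ⊆ closure F ∧
    ρ.vtx u ∈ closure F ∧ ρ.vtx v ∈ closure F
  adj_sub h := h.1
  edge_vert h := h.2.2.1
  symm := by
    refine ⟨fun u v h => ?_⟩
    exact ⟨h.1.symm, by rw [Sym2.eq_swap]; exact h.2.1, h.2.2.2, h.2.2.1⟩

/-- Vertices drawn inside a bounded region enclosed by the drawing of `J`. -/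
def enclosedVerts (ρ : PlaneEmbedding G) (J : G.Subgraph) : Set V :=
  {w | ρ.vtx w ∉ ρ.subImage J ∧
    Bornology.IsBounded (connectedComponentIn (ρ.subImage J)ᶜ (ρ.vtx w))}

end PlaneEmbedding

/-! ## Restricted faces and sets -/

/-- `P` is a path of length at most one (a single vertex or a single edge), as a subgraph. -/
def IsShortPathSubgraph {V : Type} (G : SimpleGraph V) (P : G.Subgraph) : Prop :=
  (∃ u, P.verts = {u} ∧ P.edgeSet = ∅) ∨
  (∃ u v, G.Adj u v ∧ P.verts = {u, v} ∧ P.edgeSet = {s(u, v)})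

/-- A face `F` is restricted under `L`: there is a path `P` of length at most one in the
boundary of `F` such that every boundary vertex off `P` has a list of size at least `3`,
vertices of `P` have nonempty lists, and `P` has an `L`-coloring. -/
def FaceRestricted {V : Type} {G : SimpleGraph V} (ρ : PlaneEmbedding G)
    (F : Set (ℝ × ℝ)) (L : V → Finset ℕ) : Prop :=
  ∃ P : G.Subgraph, P ≤ ρ.faceBoundary F ∧ IsShortPathSubgraph G P ∧
    (∀ v ∈ (ρ.faceBoundary F).verts, v ∉ P.verts → 3 ≤ (L v).card) ∧
    (∀ v ∈ P.verts, 1 ≤ (L v).card) ∧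
    ∃ φ : V → ℕ, IsLColoringOn P L φ

/-- A set `X` of vertices is restricted under `L`: there are a face `F` and a path `P` of
length at most one in the boundary of `F` such that every vertex of `X` has a list of size at
least `3`, vertices of `P` have nonempty lists, and `P` has an `L`-coloring. -/
def SetRestricted {V : Type} {G : SimpleGraph V} (ρ : PlaneEmbedding G)
    (L : V → Finset ℕ) (X : Set V) : Prop :=
  ∃ F : Set (ℝ × ℝ), ρ.IsFace F ∧
    ∃ P : G.Subgraph, P ≤ ρ.faceBoundary F ∧ IsShortPathSubgraph G P ∧
      (∀ v ∈ X, 3 ≤ (L v).card) ∧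
      (∀ v ∈ P.verts, 1 ≤ (L v).card) ∧
      ∃ φ : V → ℕ, IsLColoringOn P L φ

/-! ## Canvases -/

/-- `(G, S, L)` (together with the embedding `ρ` whose outer face is `F`) is a canvas. -/
def IsCanvas {V : Type} {G : SimpleGraph V} (ρ : PlaneEmbedding G) (F : Set (ℝ × ℝ))
    (S : G.Subgraph) (L : V → Finset ℕ) : Prop :=
  G.Connected ∧ ρ.IsOuterFace F ∧ S ≤ ρ.faceBoundary F ∧
  (∀ v, v ∉ (ρ.faceBoundary F).verts → 5 ≤ (L v).card) ∧
  (∀ v, v ∉ S.verts → 3 ≤ (L v).card) ∧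
  ∃ φ : V → ℕ, IsLColoringOn S L φ

/-- An essential cutvertex: `v` is a cutvertex, and whenever `v` divides `G` into
`G₁, G₂ ≠ G` with `V(G₁) ∩ V(G₂) = {v}` and `G₁ ∪ G₂ = G`, both sides meet `S` off `v`. -/
def EssentialCutvertex {V : Type} (G : SimpleGraph V) (S : G.Subgraph) (v : V) : Prop :=
  (∃ G₁ G₂ : G.Subgraph, G₁ ⊔ G₂ = ⊤ ∧ G₁ ≠ ⊤ ∧ G₂ ≠ ⊤ ∧ G₁.verts ∩ G₂.verts = {v}) ∧
  ∀ G₁ G₂ : G.Subgraph, G₁ ⊔ G₂ = ⊤ → G₁ ≠ ⊤ → G₂ ≠ ⊤ → G₁.verts ∩ G₂.verts = {v} →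
    (S.verts ∩ (G₁.verts \ {v})).Nonempty ∧ (S.verts ∩ (G₂.verts \ {v})).Nonempty

/-- `P'` is a span with an exterior `E`: `P'` is a path whose ends have lists of size
less than five, and there is a path `δ` between the ends of `P'` lying in the outer walk
whose interior contains neither a vertex of `S` nor an essential cutvertex;
`E = V(δ) ∪ Int(P' ∪ δ)`. -/
def IsSpanWithExt {V : Type} {G : SimpleGraph V} (ρ : PlaneEmbedding G) (F : Set (ℝ × ℝ))
    (S : G.Subgraph) (L : V → Finset ℕ) (P' : G.Subgraph) (E : Set V) : Prop :=
  ∃ (u v : V) (p : G.Walk u v), p.IsPath ∧ p.toSubgraph = P' ∧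
    (L u).card < 5 ∧ (L v).card < 5 ∧
    ∃ d : G.Walk u v, d.IsPath ∧ d.toSubgraph ≤ ρ.faceBoundary F ∧
      (∀ w ∈ d.support, w ≠ u → w ≠ v → w ∉ S.verts ∧ ¬ EssentialCutvertex G S w) ∧
      E = {w | w ∈ d.support} ∪ ρ.enclosedVerts (P' ⊔ d.toSubgraph)

/-- A vertex is superfluous if it is not in `S` and lies in the exterior of some span on
three vertices. -/
def Superfluous {V : Type} {G : SimpleGraph V} (ρ : PlaneEmbedding G) (F : Set (ℝ × ℝ))
    (S : G.Subgraph) (L : V → Finset ℕ) (v : V) : Prop :=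
  v ∉ S.verts ∧ ∃ (P' : G.Subgraph) (E : Set V),
    IsSpanWithExt ρ F S L P' E ∧ P'.verts.ncard = 3 ∧ v ∈ E

/-- The vertex set of the truncation `G*`: the substantial (non-superfluous) vertices. -/
def truncVerts {V : Type} {G : SimpleGraph V} (ρ : PlaneEmbedding G) (F : Set (ℝ × ℝ))
    (S : G.Subgraph) (L : V → Finset ℕ) : Set V :=
  {v | ¬ Superfluous ρ F S L v}

/-- `S` is a disjoint union of paths: max degree at most two and no cycles. -/
def IsDisjointUnionOfPaths {V : Type} {G : SimpleGraph V} (S : G.Subgraph) : Prop :=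
  (∀ v ∈ S.verts, (S.neighborSet v).ncard ≤ 2) ∧
  ∀ (u : V) (w : G.Walk u u), w.IsCycle → ¬ w.toSubgraph ≤ S

/-! ## Steiner trees -/

/-- `T` is an optimal Steiner tree for `S` in `G`: a connected subgraph containing `S`
with as few edges as possible. -/
def IsOptimalSteinerTree {V : Type} (G : SimpleGraph V) (S : Set V) (T : G.Subgraph) : Prop :=
  T.Connected ∧ S ⊆ T.verts ∧
  ∀ T' : G.Subgraph, T'.Connected → S ⊆ T'.verts → T.edgeSet.ncard ≤ T'.edgeSet.ncard

/-- A branch vertex of `T` with respect to `S`: a vertex of `T` that is in `S` or does not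
have degree exactly two in `T`. These are the vertices kept when suppressing degree-two
vertices not in `S`. -/
def IsBranchVertex {V : Type} {G : SimpleGraph V} (T : G.Subgraph) (S : Set V) (v : V) : Prop :=
  v ∈ T.verts ∧ (v ∈ S ∨ (T.neighborSet v).ncard ≠ 2)

/-- A seam of `T` (with respect to `S`): a nontrivial path in `T` whose ends are branch
vertices and whose internal vertices are not branch vertices. -/
def IsSeamWalk {V : Type} {G : SimpleGraph V} (T : G.Subgraph) (S : Set V) {u v : V}
    (p : G.Walk u v) : Prop :=
  p.IsPath ∧ 1 ≤ p.length ∧ p.toSubgraph ≤ T ∧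
  IsBranchVertex T S u ∧ IsBranchVertex T S v ∧
  ∀ w ∈ p.support, w ≠ u → w ≠ v → ¬ IsBranchVertex T S w

/-!
If `H'` lies strictly between `G₁ ∩ G₂` and `G₂`, then `G₁ ∪ H'` lies strictly between `S` and
`G`, so criticality of `G` gives a coloring `ψ` of `G₁ ∪ H'` whose restriction to `S` does not
extend to `G`. The restriction of `ψ` to `G₁ ∩ G₂` extends to `H'`; an extension `χ` of it to
`G₂` could be glued with `ψ` on `G₁` into a coloring of `G₁ ∪ G₂ = G` extending `ψ|_S`.
-/

section ListColoring

variable {V : Type} {G : SimpleGraph V} {L : V → Finset ℕ}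

lemma IsLColoringOn.mono {H K : G.Subgraph} (h : H ≤ K) {φ : V → ℕ}
    (hφ : IsLColoringOn K L φ) : IsLColoringOn H L φ :=
  ⟨fun v hv => hφ.1 v (h.1 hv), fun _ _ huv => hφ.2 (h.2 huv)⟩

lemma IsLColoringOn.piecewise_sup {A B : G.Subgraph} {ψ χ : V → ℕ} [DecidablePred (· ∈ B.verts)]
    (hψ : IsLColoringOn A L ψ) (hχ : IsLColoringOn B L χ)
    (hagree : Set.EqOn χ ψ (A.verts ∩ B.verts)) :
    IsLColoringOn (A ⊔ B) L (B.verts.piecewise χ ψ) := by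
  have hA : Set.EqOn (B.verts.piecewise χ ψ) ψ A.verts :=
    (Set.eqOn_piecewise _).2 ⟨hagree, fun _ _ => rfl⟩
  refine ⟨fun v hv => ?_, fun u v huv => ?_⟩
  · by_cases hB : v ∈ B.verts
    · rw [Set.piecewise_eq_of_mem _ _ _ hB]
      exact hχ.1 v hB
    · rw [Set.piecewise_eq_of_notMem _ _ _ hB]
      exact hψ.1 v (hv.resolve_right hB)
  · rcases huv with hA' | hB'
    · rw [hA (A.edge_vert hA'), hA (A.edge_vert hA'.symm)]
      exact hψ.2 hA'
    · rw [Set.piecewise_eq_of_mem _ _ _ (B.edge_vert hB'),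
        Set.piecewise_eq_of_mem _ _ _ (B.edge_vert hB'.symm)]
      exact hχ.2 hB'

lemma ExtendsToIn.sup_of_inf {A B : G.Subgraph} {ψ : V → ℕ} (hψ : IsLColoringOn A L ψ)
    (h : ExtendsToIn (A ⊓ B) B L ψ) : ExtendsToIn A (A ⊔ B) L ψ := by
  classical
  obtain ⟨χ, hχ, hχψ⟩ := h
  exact ⟨B.verts.piecewise χ ψ, hψ.piecewise_sup hχ hχψ,
    (Set.eqOn_piecewise _).2 ⟨hχψ, fun _ _ => rfl⟩⟩

lemma ExtendsToIn.of_le {S T H : G.Subgraph} {φ ψ : V → ℕ} (hST : S ≤ T)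
    (hψφ : ∀ v ∈ S.verts, ψ v = φ v) (h : ExtendsToIn T H L ψ) : ExtendsToIn S H L φ := by
  obtain ⟨χ, hχ, hχψ⟩ := h
  exact ⟨χ, hχ, fun v hv => (hχψ v (hST.1 hv)).trans (hψφ v hv)⟩

end ListColoring

/-- Let `G` be `S`-critical with respect to `L`, and let `G₁, G₂` be
subgraphs of `G` with `G = G₁ ∪ G₂`, `G₁ ∩ G₂` a proper subgraph of `G₂`, and `S ⊆ G₁`.
Then `G₂` is `(G₁ ∩ G₂)`-critical with respect to `L`. -/
theorem critical_cut
    {V : Type} (G : SimpleGraph V) (L : V → Finset ℕ) (S G₁ G₂ : G.Subgraph)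
    (hcrit : IsCriticalIn L S ⊤)
    (hunion : G₁ ⊔ G₂ = ⊤)
    (hproper : G₁ ⊓ G₂ < G₂)
    (hS : S ≤ G₁) :
    IsCriticalIn L (G₁ ⊓ G₂) G₂ := by
  refine ⟨inf_le_right, hproper.ne, fun H' hle hlt => ?_⟩
  have hlt' : G₁ ⊔ H' < ⊤ := by
    rw [← hunion, sup_comm G₁, sup_comm G₁]
    exact sup_lt_sup_of_lt_of_inf_le_inf hlt (le_inf (inf_comm G₁ G₂ ▸ hle) inf_le_right)
  obtain ⟨φ, -, ⟨ψ, hψ, hψφ⟩, hφ⟩ := hcrit.2.2 (G₁ ⊔ H') (hS.trans le_sup_left) hlt'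
  refine ⟨ψ, hψ.mono (inf_le_left.trans le_sup_left),
    ⟨ψ, hψ.mono le_sup_right, fun _ _ => rfl⟩, fun hext => hφ ?_⟩
  have hG₁ : ExtendsToIn G₁ ⊤ L ψ := hunion ▸ ExtendsToIn.sup_of_inf (hψ.mono le_sup_left) hext
  exact hG₁.of_le hS hψφ
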